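/- Let G be a connected graph on [n] and P a semiequitable partition of [n] for G (i.e., each induced bipartite graph G[Pᵢ,Pⱼ], i < j, is semiregular). Then μ₁(G) = μ₁(A(G)|P×P) if and only if P is equitable for G, i.e., each G[Pᵢ] is additionally regular. -/

import Mathlib

/-!
Let `S` be the characteristic matrix of `P` with columns scaled to unit length. Then `SᵀS = 1`
and the quotient matrix is `B = SᵀAS`, so comparing Rayleigh quotients gives `μ₁(B) ≤ μ₁(A)`.

If equality holds and `y` is a top eigenvector of `B`, then `S y` is a top eigenvector of `A`.
As `A ≥ 0`, so is `|S y|`; it is positive by connectivity and constant on the parts, say `c p` on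
`Pₚ`. The eigenvalue equation at `u ∈ Pₚ` reads `∑_q d_q(u) c_q = μ₁ c_p`, where `d_q(u)` counts
the neighbours of `u` in `P_q`. Semiregularity makes the terms with `q ≠ p` independent of `u`,
hence so is `d_p(u)`.

Conversely, if `P` is equitable then `AS = SB`, hence `SᵀA = BSᵀ`, and for a top eigenvector `v`
of `A` the nonnegative vector `Sᵀ|v| ≠ 0` is an eigenvector of `B` for `μ₁(A)`.
-/

def partSet {n k : ℕ} (P : Fin n → Fin k) (i : Fin k) : Finset (Fin n) :=
  Finset.univ.filter (fun v => P v = i)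

noncomputable def quotMat {m n k l : ℕ} (A : Matrix (Fin m) (Fin n) ℝ)
    (P : Fin m → Fin k) (Q : Fin n → Fin l) : Matrix (Fin k) (Fin l) ℝ :=
  fun p q => (1 / Real.sqrt (((partSet P p).card : ℝ) * ((partSet Q q).card : ℝ))) *
    ∑ i ∈ partSet P p, ∑ j ∈ partSet Q q, A i j

def degIn {n : ℕ} (G : SimpleGraph (Fin n)) [DecidableRel G.Adj]
    (X : Finset (Fin n)) (v : Fin n) : ℕ :=
  (X.filter (fun u => G.Adj v u)).card

open Matrix

namespace Matrix.IsHermitian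

variable {ι : Type*} [Fintype ι] [DecidableEq ι] {M : Matrix ι ι ℝ} (hM : M.IsHermitian)

lemma posSemidef_iSup_eigenvalues_smul_one_sub :
    ((⨆ i, hM.eigenvalues i) • (1 : Matrix ι ι ℝ) - M).PosSemidef := by
  rw [posSemidef_iff_isHermitian_and_spectrum_nonneg, ← Algebra.algebraMap_eq_smul_one]
  refine ⟨IsSelfAdjoint.sub (.algebraMap _ (.all _)) hM, ?_⟩
  rw [← spectrum.singleton_sub_eq, hM.spectrum_real_eq_range_eigenvalues]
  rintro _ ⟨_, rfl, _, ⟨i, rfl⟩, rfl⟩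
  exact sub_nonneg.2 (le_ciSup (Set.finite_range hM.eigenvalues).bddAbove i)

lemma dotProduct_mulVec_le_iSup_eigenvalues_mul (x : ι → ℝ) :
    x ⬝ᵥ M *ᵥ x ≤ (⨆ i, hM.eigenvalues i) * (x ⬝ᵥ x) := by
  have h := hM.posSemidef_iSup_eigenvalues_smul_one_sub.dotProduct_mulVec_nonneg x
  simpa only [star_trivial, sub_mulVec, smul_mulVec, one_mulVec, dotProduct_sub,
    dotProduct_smul, smul_eq_mul, sub_nonneg] using h

lemma mulVec_eq_iSup_eigenvalues_smul_of_dotProduct_mulVec_eq {x : ι → ℝ}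
    (hx : x ⬝ᵥ M *ᵥ x = (⨆ i, hM.eigenvalues i) * (x ⬝ᵥ x)) :
    M *ᵥ x = (⨆ i, hM.eigenvalues i) • x := by
  have h := hM.posSemidef_iSup_eigenvalues_smul_one_sub.dotProduct_mulVec_zero_iff x
  simp only [star_trivial, sub_mulVec, smul_mulVec, one_mulVec, dotProduct_sub,
    dotProduct_smul, smul_eq_mul, hx, sub_self, true_iff, sub_eq_zero] at h
  exact h.symm

lemma exists_mulVec_eq_iSup_eigenvalues_smul [Nonempty ι] :
    ∃ v : ι → ℝ, v ≠ 0 ∧ M *ᵥ v = (⨆ i, hM.eigenvalues i) • v := by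
  obtain ⟨i, hi⟩ := Finite.exists_max hM.eigenvalues
  have hmax : (⨆ j, hM.eigenvalues j) = hM.eigenvalues i :=
    le_antisymm (ciSup_le hi) (le_ciSup (Set.finite_range _).bddAbove i)
  refine ⟨⇑(hM.eigenvectorBasis i), fun h => ?_, hmax ▸ hM.mulVec_eigenvectorBasis i⟩
  exact hM.eigenvectorBasis.orthonormal.ne_zero i (by ext j; exact congrFun h j)

lemma le_iSup_eigenvalues_of_mulVec_eq_smul {x : ι → ℝ} {c : ℝ} (hx : x ≠ 0)
    (hc : M *ᵥ x = c • x) : c ≤ ⨆ i, hM.eigenvalues i := by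
  have h := hM.dotProduct_mulVec_le_iSup_eigenvalues_mul x
  rw [hc, dotProduct_smul, smul_eq_mul] at h
  exact le_of_mul_le_mul_right h (by simpa using dotProduct_star_self_pos_iff.mpr hx)

lemma mulVec_abs_eq_iSup_eigenvalues_smul (hM0 : ∀ i j, 0 ≤ M i j) {v : ι → ℝ}
    (hv : M *ᵥ v = (⨆ i, hM.eigenvalues i) • v) :
    M *ᵥ |v| = (⨆ i, hM.eigenvalues i) • |v| := by
  refine hM.mulVec_eq_iSup_eigenvalues_smul_of_dotProduct_mulVec_eq
    (le_antisymm (hM.dotProduct_mulVec_le_iSup_eigenvalues_mul _) ?_)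
  have habs : |v| ⬝ᵥ |v| = v ⬝ᵥ v := by simp [dotProduct, abs_mul_abs_self]
  calc (⨆ i, hM.eigenvalues i) * (|v| ⬝ᵥ |v|) = v ⬝ᵥ M *ᵥ v := by
        rw [habs, hv, dotProduct_smul, smul_eq_mul]
    _ ≤ |v| ⬝ᵥ M *ᵥ |v| := by
        simp only [dotProduct, mulVec, Finset.mul_sum]
        refine Finset.sum_le_sum fun i _ => Finset.sum_le_sum fun j _ => ?_
        calc v i * (M i j * v j) = M i j * (v i * v j) := by ring
          _ ≤ M i j * (|v| i * |v| j) := by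
              refine mul_le_mul_of_nonneg_left ?_ (hM0 i j)
              simpa [abs_mul] using le_abs_self (v i * v j)
          _ = |v| i * (M i j * |v| j) := by ring

end Matrix.IsHermitian

section Compression

variable {ι κ : Type*} [Fintype ι] [Fintype κ]
  {A : Matrix ι ι ℝ} {B : Matrix κ κ ℝ} {S : Matrix ι κ ℝ}

lemma dotProduct_transpose_mul_mul_mulVec (y : κ → ℝ) :
    y ⬝ᵥ (Sᵀ * A * S) *ᵥ y = (S *ᵥ y) ⬝ᵥ A *ᵥ (S *ᵥ y) := by
  rw [← mulVec_mulVec, ← mulVec_mulVec, dotProduct_mulVec y, vecMul_transpose]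

variable [DecidableEq κ]

lemma dotProduct_mulVec_of_transpose_mul_self_eq_one (hS : Sᵀ * S = 1) (y : κ → ℝ) :
    (S *ᵥ y) ⬝ᵥ (S *ᵥ y) = y ⬝ᵥ y := by
  rw [dotProduct_mulVec, ← vecMul_transpose, vecMul_vecMul, hS, vecMul_one]

variable [DecidableEq ι]

lemma iSup_eigenvalues_le_of_eq_transpose_mul_mul [Nonempty κ] (hA : A.IsHermitian)
    (hB : B.IsHermitian) (hS : Sᵀ * S = 1) (hBS : B = Sᵀ * A * S) :
    (⨆ p, hB.eigenvalues p) ≤ ⨆ i, hA.eigenvalues i := by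
  obtain ⟨y, hy0, hy⟩ := hB.exists_mulVec_eq_iSup_eigenvalues_smul
  have h := hA.dotProduct_mulVec_le_iSup_eigenvalues_mul (S *ᵥ y)
  rw [← dotProduct_transpose_mul_mul_mulVec, ← hBS, hy,
    dotProduct_mulVec_of_transpose_mul_self_eq_one hS, dotProduct_smul, smul_eq_mul] at h
  exact le_of_mul_le_mul_right h (by simpa using dotProduct_star_self_pos_iff.mpr hy0)

lemma exists_mulVec_eq_smul_of_iSup_eigenvalues_le [Nonempty κ] (hA : A.IsHermitian)
    (hB : B.IsHermitian) (hS : Sᵀ * S = 1) (hBS : B = Sᵀ * A * S)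
    (hle : (⨆ i, hA.eigenvalues i) ≤ ⨆ p, hB.eigenvalues p) :
    ∃ y : κ → ℝ, S *ᵥ y ≠ 0 ∧ A *ᵥ (S *ᵥ y) = (⨆ i, hA.eigenvalues i) • (S *ᵥ y) := by
  obtain ⟨y, hy0, hy⟩ := hB.exists_mulVec_eq_iSup_eigenvalues_smul
  have hSy : S *ᵥ y ≠ 0 := fun h => hy0 (by simpa [hS] using congrArg (Sᵀ *ᵥ ·) h)
  refine ⟨y, hSy, hA.mulVec_eq_iSup_eigenvalues_smul_of_dotProduct_mulVec_eq ?_⟩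
  have hyy := dotProduct_star_self_pos_iff.mpr hy0
  rw [star_trivial] at hyy
  refine le_antisymm (hA.dotProduct_mulVec_le_iSup_eigenvalues_mul _) ?_
  rw [← dotProduct_transpose_mul_mul_mulVec, ← hBS, hy,
    dotProduct_mulVec_of_transpose_mul_self_eq_one hS, dotProduct_smul, smul_eq_mul]
  exact mul_le_mul_of_nonneg_right hle hyy.le

lemma iSup_eigenvalues_le_of_mul_eq_mul [Nonempty ι] (hA : A.IsHermitian) (hB : B.IsHermitian)
    (hA0 : ∀ i j, 0 ≤ A i j) (hS0 : ∀ i p, 0 ≤ S i p) (hSpos : ∀ i, ∃ p, 0 < S i p)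
    (hAS : A * S = S * B) :
    (⨆ i, hA.eigenvalues i) ≤ ⨆ p, hB.eigenvalues p := by
  obtain ⟨v, hv0, hv⟩ := hA.exists_mulVec_eq_iSup_eigenvalues_smul
  have hSA : Sᵀ * A = B * Sᵀ := by
    have hAt : Aᵀ = A := (conjTranspose_eq_transpose_of_trivial A).symm.trans hA
    have hBt : Bᵀ = B := (conjTranspose_eq_transpose_of_trivial B).symm.trans hB
    simpa [hAt, hBt] using congrArg transpose hAS
  refine hB.le_iSup_eigenvalues_of_mulVec_eq_smul (x := Sᵀ *ᵥ |v|) ?_ ?_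
  · obtain ⟨i, hi⟩ := Function.ne_iff.mp hv0
    obtain ⟨p, hp⟩ := hSpos i
    refine Function.ne_iff.mpr ⟨p, (Finset.sum_pos' (fun j _ => ?_) ⟨i, Finset.mem_univ i, ?_⟩).ne'⟩
    · exact mul_nonneg (hS0 j p) (abs_nonneg _)
    · exact mul_pos hp (abs_pos.mpr hi)
  · rw [mulVec_mulVec, ← hSA, ← mulVec_mulVec, hA.mulVec_abs_eq_iSup_eigenvalues_smul hA0 hv,
      mulVec_smul]

end Compression

lemma SimpleGraph.adjMatrix_nonneg {V α : Type*} [Zero α] [One α] [Preorder α] [ZeroLEOneClass α]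
    (G : SimpleGraph V) [DecidableRel G.Adj] (i j : V) : 0 ≤ G.adjMatrix α i j := by
  rw [adjMatrix_apply]
  split_ifs
  exacts [zero_le_one, le_rfl]

lemma SimpleGraph.Connected.pos_of_adjMatrix_mulVec_eq_smul {V : Type*} [Fintype V]
    [DecidableEq V] {G : SimpleGraph V} [DecidableRel G.Adj] (hG : G.Connected) {w : V → ℝ}
    {μ : ℝ} (hw0 : 0 ≤ w) (hw : w ≠ 0) (h : G.adjMatrix ℝ *ᵥ w = μ • w) (i : V) : 0 < w i := by
  have hadj : ∀ a b, G.Adj a b → w a = 0 → w b = 0 := by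
    intro a b hab ha
    have hsum : ∑ j, G.adjMatrix ℝ a j * w j = 0 := by
      simpa [mulVec, dotProduct, ha] using congrFun h a
    have hterm := (Finset.sum_eq_zero_iff_of_nonneg fun j _ => mul_nonneg
      (G.adjMatrix_nonneg a j) (hw0 j)).mp hsum b (Finset.mem_univ b)
    simpa [hab] using hterm
  have hwalk : ∀ a b, G.Walk a b → w a = 0 → w b = 0 := by
    intro a b p
    induction p with
    | nil => exact id
    | cons hab _ ih => exact fun ha => ih (hadj _ _ hab ha)
  obtain ⟨j, hj⟩ := Function.ne_iff.mp hw
  exact (hw0 i).lt_of_ne' fun hi => hj (hwalk i j (hG.preconnected i j).some hi)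

section Partition

variable {n k : ℕ} {P : Fin n → Fin k}

@[simp]
lemma mem_partSet {i : Fin n} {p : Fin k} : i ∈ partSet P p ↔ P i = p := by
  simp [partSet]

lemma card_partSet_pos (hP : Function.Surjective P) (p : Fin k) : 0 < (partSet P p).card := by
  obtain ⟨i, hi⟩ := hP p
  exact Finset.card_pos.mpr ⟨i, mem_partSet.mpr hi⟩

variable (P)

noncomputable def normalizedCharMatrix : Matrix (Fin n) (Fin k) ℝ :=
  fun i p => if P i = p then (Real.sqrt (partSet P p).card)⁻¹ else 0

lemma normalizedCharMatrix_nonneg (i : Fin n) (p : Fin k) : 0 ≤ normalizedCharMatrix P i p := by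
  unfold normalizedCharMatrix
  split_ifs <;> positivity

lemma normalizedCharMatrix_apply_self_pos (i : Fin n) : 0 < normalizedCharMatrix P i (P i) := by
  have hcard : 0 < (partSet P (P i)).card := Finset.card_pos.mpr ⟨i, mem_partSet.mpr rfl⟩
  simpa [normalizedCharMatrix] using hcard

lemma normalizedCharMatrix_mulVec_apply (y : Fin k → ℝ) (i : Fin n) :
    (normalizedCharMatrix P *ᵥ y) i = (Real.sqrt (partSet P (P i)).card)⁻¹ * y (P i) := by
  simp [mulVec, dotProduct, normalizedCharMatrix, ite_mul]

lemma normalizedCharMatrix_mul_apply (B : Matrix (Fin k) (Fin k) ℝ) (i : Fin n) (q : Fin k) :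
    (normalizedCharMatrix P * B) i q = (Real.sqrt (partSet P (P i)).card)⁻¹ * B (P i) q := by
  simp [mul_apply, normalizedCharMatrix, ite_mul]

lemma mul_normalizedCharMatrix_apply {α : Type*} (A : Matrix α (Fin n) ℝ) (i : α) (q : Fin k) :
    (A * normalizedCharMatrix P) i q
      = (∑ j ∈ partSet P q, A i j) * (Real.sqrt (partSet P q).card)⁻¹ := by
  simp [mul_apply, normalizedCharMatrix, partSet, Finset.sum_filter, Finset.sum_mul]

lemma transpose_normalizedCharMatrix_mul_apply {β : Type*} (A : Matrix (Fin n) β ℝ) (p : Fin k)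
    (j : β) :
    ((normalizedCharMatrix P)ᵀ * A) p j
      = (Real.sqrt (partSet P p).card)⁻¹ * ∑ i ∈ partSet P p, A i j := by
  simp [mul_apply, normalizedCharMatrix, partSet, Finset.sum_filter, Finset.mul_sum]

lemma transpose_normalizedCharMatrix_mul_self (hP : Function.Surjective P) :
    (normalizedCharMatrix P)ᵀ * normalizedCharMatrix P = 1 := by
  ext p q
  have hp : (0 : ℝ) < (partSet P p).card := by exact_mod_cast card_partSet_pos hP p
  rw [transpose_normalizedCharMatrix_mul_apply]
  rcases eq_or_ne p q with rfl | hpq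
  · have hcol : ∀ i ∈ partSet P p, normalizedCharMatrix P i p = (Real.sqrt (partSet P p).card)⁻¹ :=
      fun i hi => if_pos (mem_partSet.mp hi)
    rw [Finset.sum_congr rfl hcol, Finset.sum_const, nsmul_eq_mul, one_apply_eq]
    field_simp
    exact (Real.sq_sqrt hp.le).symm
  · have hcol : ∀ i ∈ partSet P p, normalizedCharMatrix P i q = 0 :=
      fun i hi => if_neg (by rw [mem_partSet.mp hi]; exact hpq)
    rw [Finset.sum_congr rfl hcol, one_apply_ne hpq]
    simp

lemma quotMat_self_eq (A : Matrix (Fin n) (Fin n) ℝ) :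
    quotMat A P P = (normalizedCharMatrix P)ᵀ * A * normalizedCharMatrix P := by
  ext p q
  rw [mul_normalizedCharMatrix_apply]
  simp only [transpose_normalizedCharMatrix_mul_apply, ← Finset.mul_sum]
  rw [quotMat, Finset.sum_comm, Real.sqrt_mul (Nat.cast_nonneg _), one_div, mul_inv]
  ring

lemma mul_normalizedCharMatrix_eq_mul_quotMat (A : Matrix (Fin n) (Fin n) ℝ)
    (hA : ∀ p q, ∀ u ∈ partSet P p, ∀ v ∈ partSet P p,
      ∑ j ∈ partSet P q, A u j = ∑ j ∈ partSet P q, A v j) :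
    A * normalizedCharMatrix P = normalizedCharMatrix P * quotMat A P P := by
  ext i q
  have hi : i ∈ partSet P (P i) := mem_partSet.mpr rfl
  have hcard : (0 : ℝ) < (partSet P (P i)).card := by exact_mod_cast Finset.card_pos.mpr ⟨i, hi⟩
  have hrows : ∑ u ∈ partSet P (P i), ∑ j ∈ partSet P q, A u j
      = (partSet P (P i)).card * ∑ j ∈ partSet P q, A i j := by
    rw [Finset.sum_congr rfl fun u hu => hA (P i) q u hu i hi, Finset.sum_const, nsmul_eq_mul]
  rw [mul_normalizedCharMatrix_apply, normalizedCharMatrix_mul_apply, quotMat, hrows,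
    Real.sqrt_mul hcard.le, one_div, mul_inv]
  field_simp
  rw [Real.sq_sqrt hcard.le]

end Partition

section Graph

variable {n k : ℕ} (G : SimpleGraph (Fin n)) [DecidableRel G.Adj] (P : Fin n → Fin k)

lemma sum_adjMatrix_eq_degIn (X : Finset (Fin n)) (u : Fin n) :
    ∑ j ∈ X, G.adjMatrix ℝ u j = degIn G X u := by
  simp [SimpleGraph.adjMatrix_apply, degIn, Finset.sum_boole]

lemma adjMatrix_mulVec_comp_apply (c : Fin k → ℝ) (u : Fin n) :
    (G.adjMatrix ℝ *ᵥ (c ∘ P)) u = ∑ q, degIn G (partSet P q) u * c q := by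
  rw [mulVec, dotProduct, ← Finset.sum_fiberwise Finset.univ P]
  refine Finset.sum_congr rfl fun q _ => ?_
  rw [← sum_adjMatrix_eq_degIn, Finset.sum_mul]
  exact Finset.sum_congr rfl fun j hj => by rw [Function.comp_apply, (Finset.mem_filter.mp hj).2]

def IsSemiequitable : Prop :=
  ∀ p q, p ≠ q → ∀ u ∈ partSet P p, ∀ v ∈ partSet P p,
    degIn G (partSet P q) u = degIn G (partSet P q) v

def IsEquitable : Prop :=
  ∀ p q, ∀ u ∈ partSet P p, ∀ v ∈ partSet P p, degIn G (partSet P q) u = degIn G (partSet P q) v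

variable {G P}

lemma IsSemiequitable.isEquitable (hsemi : IsSemiequitable G P)
    (hreg : ∀ p, ∀ u ∈ partSet P p, ∀ v ∈ partSet P p,
      degIn G (partSet P p) u = degIn G (partSet P p) v) :
    IsEquitable G P := by
  intro p q
  rcases eq_or_ne p q with rfl | hpq
  exacts [hreg p, hsemi p q hpq]

lemma IsEquitable.adjMatrix_mul_normalizedCharMatrix (h : IsEquitable G P) :
    G.adjMatrix ℝ * normalizedCharMatrix P
      = normalizedCharMatrix P * quotMat (G.adjMatrix ℝ) P P :=
  mul_normalizedCharMatrix_eq_mul_quotMat P _ fun p q u hu v hv => by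
    simp only [sum_adjMatrix_eq_degIn, h p q u hu v hv]

lemma exists_pos_weights_of_iSup_eigenvalues_le (hG : G.Connected) (hP : Function.Surjective P)
    (hA : (G.adjMatrix ℝ).IsHermitian) (hB : (quotMat (G.adjMatrix ℝ) P P).IsHermitian)
    (hle : (⨆ i, hA.eigenvalues i) ≤ ⨆ p, hB.eigenvalues p) :
    ∃ c : Fin k → ℝ, (∀ p, 0 < c p) ∧
      ∀ u, ∑ q, degIn G (partSet P q) u * c q = (⨆ i, hA.eigenvalues i) * c (P u) := by
  have : Nonempty (Fin k) := ⟨P hG.nonempty.some⟩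
  obtain ⟨y, hy0, hy⟩ := exists_mulVec_eq_smul_of_iSup_eigenvalues_le hA hB
    (transpose_normalizedCharMatrix_mul_self P hP) (quotMat_self_eq P _) hle
  set c : Fin k → ℝ := fun p => (Real.sqrt (partSet P p).card)⁻¹ * |y p|
  have hc : |normalizedCharMatrix P *ᵥ y| = c ∘ P := by
    ext i
    simp [normalizedCharMatrix_mulVec_apply, c, abs_mul]
  have hcA := hA.mulVec_abs_eq_iSup_eigenvalues_smul G.adjMatrix_nonneg hy
  rw [hc] at hcA
  refine ⟨c, fun p => ?_, fun u => by rw [← adjMatrix_mulVec_comp_apply, hcA]; rfl⟩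
  obtain ⟨i, rfl⟩ := hP p
  refine hG.pos_of_adjMatrix_mulVec_eq_smul (hc ▸ abs_nonneg _) ?_ hcA i
  rw [← hc]
  exact fun h => hy0 (funext fun j => abs_eq_zero.mp (congrFun h j))

lemma IsSemiequitable.degIn_self_eq_of_sum_degIn_mul_eq (hsemi : IsSemiequitable G P)
    {c : Fin k → ℝ} (hc : ∀ p, 0 < c p) {μ : ℝ}
    (heig : ∀ u, ∑ q, degIn G (partSet P q) u * c q = μ * c (P u)) :
    ∀ p, ∀ u ∈ partSet P p, ∀ v ∈ partSet P p,
      degIn G (partSet P p) u = degIn G (partSet P p) v := by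
  intro p u hu v hv
  have h := heig u
  rw [mem_partSet.mp hu, ← mem_partSet.mp hv, ← heig v,
    ← Finset.add_sum_erase _ _ (Finset.mem_univ p), ← Finset.add_sum_erase _ _ (Finset.mem_univ p),
    Finset.sum_congr rfl fun q hq => by
      rw [hsemi p q (Finset.ne_of_mem_erase hq).symm u hu v hv]] at h
  exact_mod_cast mul_right_cancel₀ (hc p).ne' (add_right_cancel h)

end Graph

theorem stmt16_general {n k : ℕ}
    (G : SimpleGraph (Fin n)) [DecidableRel G.Adj] (hconn : G.Connected)
    (hA : (G.adjMatrix ℝ).IsHermitian)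
    (P : Fin n → Fin k) (hsurj : Function.Surjective P)
    (hsemi : ∀ i j : Fin k, i ≠ j → ∀ u ∈ partSet P i, ∀ v ∈ partSet P i,
      degIn G (partSet P j) u = degIn G (partSet P j) v)
    (hB : (quotMat (G.adjMatrix ℝ) P P).IsHermitian) :
    (⨆ i : Fin n, hA.eigenvalues i) = (⨆ p : Fin k, hB.eigenvalues p) ↔
      ∀ i : Fin k, ∀ u ∈ partSet P i, ∀ v ∈ partSet P i,
        degIn G (partSet P i) u = degIn G (partSet P i) v := by
  have : Nonempty (Fin n) := hconn.nonempty
  have : Nonempty (Fin k) := ⟨P (Classical.arbitrary _)⟩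
  have hsemiP : IsSemiequitable G P := hsemi
  constructor
  · intro heq
    obtain ⟨c, hc, heig⟩ := exists_pos_weights_of_iSup_eigenvalues_le hconn hsurj hA hB heq.le
    exact hsemiP.degIn_self_eq_of_sum_degIn_mul_eq hc heig
  · intro hreg
    refine le_antisymm ?_ (iSup_eigenvalues_le_of_eq_transpose_mul_mul hA hB
      (transpose_normalizedCharMatrix_mul_self P hsurj) (quotMat_self_eq P _))
    exact iSup_eigenvalues_le_of_mul_eq_mul hA hB G.adjMatrix_nonneg
      (normalizedCharMatrix_nonneg P) (fun i => ⟨P i, normalizedCharMatrix_apply_self_pos P i⟩)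
      (hsemiP.isEquitable hreg).adjMatrix_mul_normalizedCharMatrix

/-- for a connected graph `G` and a semiequitable partition `P`
(each `G[P i, P j]`, `i ≠ j`, is semiregular), `μ₁(G) = μ₁(A(G)|P×P)` if and only
if `P` is equitable, i.e. each `G[P i]` is regular. -/
theorem stmt16 {n k : ℕ} (hn : 0 < n) (hk : 0 < k)
    (G : SimpleGraph (Fin n)) [DecidableRel G.Adj] (hconn : G.Connected)
    (hA : (G.adjMatrix ℝ).IsHermitian)
    (P : Fin n → Fin k) (hsurj : Function.Surjective P)
    (hsemi : ∀ i j : Fin k, i ≠ j → ∀ u ∈ partSet P i, ∀ v ∈ partSet P i,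
      degIn G (partSet P j) u = degIn G (partSet P j) v)
    (hB : (quotMat (G.adjMatrix ℝ) P P).IsHermitian) :
    (⨆ i : Fin n, hA.eigenvalues i) = (⨆ p : Fin k, hB.eigenvalues p) ↔
      ∀ i : Fin k, ∀ u ∈ partSet P i, ∀ v ∈ partSet P i,
        degIn G (partSet P i) u = degIn G (partSet P i) v :=
  stmt16_general G hconn hA P hsurj hsemi hB
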